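/- Let U ⊆ ℝ be an open interval and w : U → ℝ. Suppose that for every x ∈ U and every ε > 0 sufficiently small there exist constants A > 0 and B (possibly depending on x and ε but not on y) such that w(x + ε + y) = A·w(x + y) + B for all y in some interval around 0 with x + y, x + ε + y ∈ U. If w is continuous, then either w(x) = c₁·exp(c₂·x) + c₃ for some constants c₁, c₂, c₃ ∈ ℝ, or w(x) = c₁·x + c₂ for some constants c₁, c₂ ∈ ℝ. -/

import Mathlib

open Set Filter Topology

def Hyp (a b : ℝ) (w : ℝ → ℝ) : Prop :=
  ∀ x ∈ Set.Ioo a b, ∃ ε₀ > (0:ℝ), ∀ ε : ℝ, 0 < ε → ε < ε₀ →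
    ∃ A > (0:ℝ), ∃ B : ℝ, ∃ δ > (0:ℝ), ∀ y : ℝ, |y| < δ →
      x + y ∈ Set.Ioo a b → x + ε + y ∈ Set.Ioo a b →
      w (x + ε + y) = A * w (x + y) + B



lemma Hyp.neg {a b : ℝ} {w : ℝ → ℝ} (h : Hyp a b w) : Hyp a b (fun t => -(w t)) := by
  intro x hx
  obtain ⟨ε₀, hε₀, hrel⟩ := h x hx
  refine ⟨ε₀, hε₀, fun ε hε hε' => ?_⟩
  obtain ⟨A, hA, B, δ, hδ, hrel2⟩ := hrel ε hε hε'
  exact ⟨A, hA, -B, δ, hδ, fun y hy h1 h2 => by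
    have := hrel2 y hy h1 h2; simp only []; rw [this]; ring⟩

/-- A continuous function on an open interval all of whose points are local maxima is constant. -/
lemma localmax_const {c d : ℝ} {f : ℝ → ℝ} (hf : ContinuousOn f (Set.Ioo c d))
    (h : ∀ t ∈ Set.Ioo c d, ∃ δ > (0:ℝ), ∀ s ∈ Set.Ioo c d, |s - t| < δ → f s ≤ f t) :
    ∀ u ∈ Set.Ioo c d, ∀ v ∈ Set.Ioo c d, f u = f v := by
  have key : ∀ u ∈ Set.Ioo c d, ∀ v ∈ Set.Ioo c d, u < v → f u = f v := by
    intro u hu v hv huv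
    have hIcc : Icc u v ⊆ Ioo c d := fun x hx => ⟨lt_of_lt_of_le hu.1 hx.1, lt_of_le_of_lt hx.2 hv.2⟩
    have hfc : ContinuousOn f (Icc u v) := hf.mono hIcc
    rcases lt_trichotomy (f u) (f v) with hlt | heq | hgt
    · exfalso
      set m := (f u + f v)/2 with hm
      have hm1 : f u < m := by simp [hm]; linarith
      have hm2 : m < f v := by simp [hm]; linarith
      have hS : ∃ x ∈ Icc u v, f x = m := by
        have := intermediate_value_Icc huv.le hfc ⟨hm1.le, hm2.le⟩
        obtain ⟨x, hx, hfx⟩ := this; exact ⟨x, hx, hfx⟩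
      set S := {x ∈ Icc u v | f x = m} with hSdef
      have hSne : S.Nonempty := by obtain ⟨x, hx, hfx⟩ := hS; exact ⟨x, hx, hfx⟩
      have hSbdd : BddAbove S := ⟨v, fun x hx => hx.1.2⟩
      have hSclosed : IsClosed S := by
        have : S = Icc u v ∩ f ⁻¹' {m} := by ext x; exact Iff.rfl
        rw [this]
        exact hfc.preimage_isClosed_of_isClosed isClosed_Icc isClosed_singleton
      have hsmem : sSup S ∈ S := hSclosed.csSup_mem hSne hSbdd
      set s := sSup S with hs
      have hsv : s < v := by
        rcases eq_or_lt_of_le hsmem.1.2 with he | h2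
        · exfalso; rw [he] at hsmem; rw [hsmem.2] at hm2; exact lt_irrefl _ hm2
        · exact h2
      have hgt' : ∀ t ∈ Ioc s v, m < f t := by
        intro t ht
        by_contra hle
        push_neg at hle
        rcases eq_or_lt_of_le hle with he | hlt2
        · have : t ∈ S := ⟨⟨hsmem.1.1.trans ht.1.le, ht.2⟩, he⟩
          exact absurd (le_csSup hSbdd this) (not_le.2 ht.1)
        · have hIcc2 : Icc t v ⊆ Icc u v := Icc_subset_Icc (hsmem.1.1.trans ht.1.le) le_rfl
          have := intermediate_value_Icc ht.2 (hfc.mono hIcc2) (⟨hlt2.le, hm2.le⟩ : m ∈ Icc (f t) (f v))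
          obtain ⟨r, hr, hfr⟩ := this
          have : r ∈ S := ⟨hIcc2 hr, hfr⟩
          have := le_csSup hSbdd this
          have : t ≤ s := hr.1.trans this
          exact absurd this (not_le.2 ht.1)
      obtain ⟨δ, hδ, hmax⟩ := h s (hIcc hsmem.1)
      set t := min (s + δ/2) v with ht
      have hts : s < t := lt_min (by linarith) hsv
      have htv : t ≤ v := min_le_right _ _
      have htd : |t - s| < δ := by
        rw [abs_of_pos (by linarith)]
        have : t ≤ s + δ/2 := min_le_left _ _
        linarith
      have htmem : t ∈ Ioo c d := hIcc ⟨hsmem.1.1.trans hts.le, htv⟩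
      have h1 : f t ≤ f s := hmax t htmem htd
      have h2 : m < f t := hgt' t ⟨hts, htv⟩
      rw [hsmem.2] at h1
      linarith
    · exact heq
    · exfalso
      set m := (f u + f v)/2 with hm
      have hm1 : f v < m := by simp [hm]; linarith
      have hm2 : m < f u := by simp [hm]; linarith
      have hS : ∃ x ∈ Icc u v, f x = m := by
        have := intermediate_value_Icc' huv.le hfc ⟨hm1.le, hm2.le⟩
        obtain ⟨x, hx, hfx⟩ := this; exact ⟨x, hx, hfx⟩
      set S := {x ∈ Icc u v | f x = m} with hSdef
      have hSne : S.Nonempty := by obtain ⟨x, hx, hfx⟩ := hS; exact ⟨x, hx, hfx⟩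
      have hSbdd : BddBelow S := ⟨u, fun x hx => hx.1.1⟩
      have hSclosed : IsClosed S := by
        have : S = Icc u v ∩ f ⁻¹' {m} := by ext x; exact Iff.rfl
        rw [this]
        exact hfc.preimage_isClosed_of_isClosed isClosed_Icc isClosed_singleton
      have hsmem : sInf S ∈ S := hSclosed.csInf_mem hSne hSbdd
      set s := sInf S with hs
      have hus : u < s := by
        rcases eq_or_lt_of_le hsmem.1.1 with he | h2
        · exfalso; rw [← he] at hsmem; rw [hsmem.2] at hm2; exact lt_irrefl _ hm2
        · exact h2
      have hgt' : ∀ t ∈ Ico u s, m < f t := by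
        intro t ht
        by_contra hle
        push_neg at hle
        rcases eq_or_lt_of_le hle with he | hlt2
        · have : t ∈ S := ⟨⟨ht.1, le_of_lt (lt_of_lt_of_le ht.2 hsmem.1.2)⟩, he⟩
          exact absurd (csInf_le hSbdd this) (not_le.2 ht.2)
        · have hIcc2 : Icc u t ⊆ Icc u v := Icc_subset_Icc le_rfl (le_of_lt (lt_of_lt_of_le ht.2 hsmem.1.2))
          have := intermediate_value_Icc' ht.1 (hfc.mono hIcc2) (⟨hlt2.le, hm2.le⟩ : m ∈ Icc (f t) (f u))
          obtain ⟨r, hr, hfr⟩ := this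
          have : r ∈ S := ⟨hIcc2 hr, hfr⟩
          have := csInf_le hSbdd this
          have : s ≤ t := this.trans hr.2
          exact absurd this (not_le.2 ht.2)
      obtain ⟨δ, hδ, hmax⟩ := h s (hIcc hsmem.1)
      set t := max (s - δ/2) u with ht
      have hts : t < s := max_lt (by linarith) hus
      have htu : u ≤ t := le_max_right _ _
      have htd : |t - s| < δ := by
        rw [abs_of_neg (by linarith), neg_sub]
        have : s - δ/2 ≤ t := le_max_left _ _
        linarith
      have htmem : t ∈ Ioo c d := hIcc ⟨htu, hts.le.trans hsmem.1.2⟩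
      have h1 : f t ≤ f s := hmax t htmem htd
      have h2 : m < f t := hgt' t ⟨htu, hts⟩
      rw [hsmem.2] at h1
      linarith
  intro u hu v hv
  rcases lt_trichotomy u v with h1 | h1 | h1
  · exact key u hu v hv h1
  · rw [h1]
  · exact (key v hv u hu h1).symm



set_option maxHeartbeats 1600000 in
/-- If `w` is constant on a nondegenerate closed subinterval, it is constant on all of `(a,b)`. -/
lemma caseA {a b : ℝ} {w : ℝ → ℝ} (hw : ContinuousOn w (Set.Ioo a b))
    (h : Hyp a b w) {z r c : ℝ} (hr : 0 < r) (hz : Set.Icc (z - r) (z + r) ⊆ Set.Ioo a b)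
    (hc : ∀ t ∈ Set.Icc (z - r) (z + r), w t = c) :
    ∀ t ∈ Set.Ioo a b, w t = c := by
  have hza : a < z - r := (hz (left_mem_Icc.2 (by linarith))).1
  have hzb : z + r < b := (hz (right_mem_Icc.2 (by linarith))).2
  have hzmem : z ∈ Set.Ioo a b := hz ⟨by linarith, by linarith⟩
  -- contAt
  have hca : ∀ t ∈ Set.Ioo a b, ContinuousAt w t := fun t ht =>
    hw.continuousAt (Ioo_mem_nhds ht.1 ht.2)
  -- Right propagation
  have Rclaim : ∀ t ∈ Set.Ioo a b, z ≤ t → w t = c := by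
    intro t ht hzt
    set T := {x | x ∈ Set.Ico z b ∧ ∀ s ∈ Set.Icc z x, w s = c} with hT
    have hTne : (z + r) ∈ T := by
      refine ⟨⟨by linarith, hzb⟩, fun s hs => hc s ⟨by linarith [hs.1], hs.2⟩⟩
    have hTbdd : BddAbove T := ⟨b, fun x hx => hx.1.2.le⟩
    set q := sSup T with hq
    have hqz : z + r ≤ q := le_csSup hTbdd hTne
    have hqb : q ≤ b := csSup_le ⟨_, hTne⟩ (fun x hx => hx.1.2.le)
    have hq1 : ∀ s ∈ Set.Ico z q, w s = c := by
      intro s hs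
      obtain ⟨x, hx, hsx⟩ := exists_lt_of_lt_csSup ⟨_, hTne⟩ hs.2
      exact hx.2 s ⟨hs.1, hsx.le⟩
    by_cases hqb' : q = b
    · -- done: t < b = q
      exact hq1 t ⟨hzt, hqb' ▸ ht.2⟩
    · exfalso
      have hqb2 : q < b := lt_of_le_of_ne hqb hqb'
      have hqmem : q ∈ Set.Ioo a b := ⟨by linarith, hqb2⟩
      have hwq : w q = c := by
        have h1 : Tendsto w (𝓝[<] q) (𝓝 (w q)) :=
          ((hca q hqmem).tendsto).mono_left nhdsWithin_le_nhds
        have h2 : Tendsto w (𝓝[<] q) (𝓝 c) := by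
          apply Tendsto.congr' _ tendsto_const_nhds
          filter_upwards [Ioo_mem_nhdsLT_of_mem (⟨by linarith, le_rfl⟩ : q ∈ Set.Ioc z q)]
            with s hs
          exact (hq1 s ⟨hs.1.le, hs.2⟩).symm
        exact tendsto_nhds_unique h1 h2
      obtain ⟨ε₀, hε₀, hrel⟩ := h q hqmem
      set ε := min (ε₀/2) ((b - q)/2) with hε
      have hεpos : 0 < ε := lt_min (by linarith) (by linarith)
      have hεb : q + ε < b := by
        have : ε ≤ (b - q)/2 := min_le_right _ _
        linarith
      set t₁ := q + ε with ht₁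
      -- inner claim
      have inner : ∀ s ∈ Set.Ioc q t₁, w s = w t₁ := by
        set M := {x | x ∈ Set.Ioc q t₁ ∧ ∀ s ∈ Set.Icc x t₁, w s = w t₁} with hM
        have hMne : t₁ ∈ M := ⟨⟨by linarith, le_rfl⟩, fun s hs => by
          have : s = t₁ := le_antisymm hs.2 hs.1; rw [this]⟩
        have hMbdd : BddBelow M := ⟨q, fun x hx => hx.1.1.le⟩
        set s₀ := sInf M with hs₀
        have hs₀q : q ≤ s₀ := le_csInf ⟨_, hMne⟩ (fun x hx => hx.1.1.le)
        have hs₀t₁ : s₀ ≤ t₁ := csInf_le hMbdd hMne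
        have hs1 : ∀ s, s₀ < s → s ≤ t₁ → w s = w t₁ := by
          intro s hs hst
          obtain ⟨x, hx, hxs⟩ := exists_lt_of_csInf_lt ⟨_, hMne⟩ hs
          exact hx.2 s ⟨hxs.le, hst⟩
        have hs₀val : s₀ = q := by
          by_contra hne
          have hs₀q2 : q < s₀ := lt_of_le_of_ne hs₀q (Ne.symm hne)
          have hs₀mem : s₀ ∈ Set.Ioo a b := ⟨by linarith, by linarith⟩
          have hws₀ : w s₀ = w t₁ := by
            rcases eq_or_lt_of_le hs₀t₁ with he | hlt
            · rw [he]
            · have h1 : Tendsto w (𝓝[>] s₀) (𝓝 (w s₀)) :=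
                ((hca s₀ hs₀mem).tendsto).mono_left nhdsWithin_le_nhds
              have h2 : Tendsto w (𝓝[>] s₀) (𝓝 (w t₁)) := by
                apply Tendsto.congr' _ tendsto_const_nhds
                filter_upwards [Ioo_mem_nhdsGT_of_mem (⟨le_rfl, hlt⟩ : s₀ ∈ Set.Ico s₀ t₁)]
                  with s hs
                exact (hs1 s hs.1 hs.2.le).symm
              exact tendsto_nhds_unique h1 h2
          -- window at s₀ from relation at q with shift εs = s₀ - q
          set εs := s₀ - q with hεs
          have hεs0 : 0 < εs := by linarith
          have hεsε : εs ≤ ε := by simp only [hεs]; linarith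
          have hεs1 : εs < ε₀ := by
            have : ε ≤ ε₀/2 := min_le_left _ _
            linarith
          obtain ⟨A, hA, B, δ, hδ, hrel2⟩ := hrel εs hεs0 hεs1
          set δ₂ := min (δ/2) (min (r/2) (εs/2)) with hδ₂
          have hδ₂0 : 0 < δ₂ := lt_min (by linarith) (lt_min (by linarith) (by linarith))
          have hwin : ∀ y : ℝ, -δ₂ ≤ y → y ≤ 0 → w (q + εs + y) = A * c + B := by
            intro y hy1 hy2
            have hyabs : |y| < δ := by
              have h1 : |y| ≤ δ₂ := abs_le.2 ⟨hy1, le_trans hy2 hδ₂0.le⟩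
              have h2 : δ₂ ≤ δ/2 := min_le_left _ _
              linarith
            have hm1 : q + y ∈ Set.Ioo a b := by
              have h1 : δ₂ ≤ r/2 := le_trans (min_le_right _ _) (min_le_left _ _)
              constructor
              · nlinarith
              · linarith
            have hm2 : q + εs + y ∈ Set.Ioo a b := by
              have h1 : δ₂ ≤ εs/2 := le_trans (min_le_right _ _) (min_le_right _ _)
              constructor
              · nlinarith
              · nlinarith
            have := hrel2 y hyabs hm1 hm2
            rw [this]
            congr 1
            congr 1
            -- w (q+y) = c : q + y ∈ [z, q]
            rcases eq_or_lt_of_le hy2 with he | hlt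
            · rw [he, add_zero, hwq]
            · apply hq1
              have h1 : δ₂ ≤ r/2 := le_trans (min_le_right _ _) (min_le_left _ _)
              exact ⟨by nlinarith, by linarith⟩
          -- w s₀ = A c + B
          have hws₀2 : w s₀ = A * c + B := by
            have h0 := hwin 0 (by linarith) le_rfl
            have he : q + εs + 0 = s₀ := by rw [hεs]; ring
            rwa [he] at h0
          -- points just left of s₀ are in M
          set s' := s₀ - δ₂/2 with hs'
          have hs'M : s' ∈ M := by
            constructor
            · constructor
              · -- q < s'
                have : δ₂ ≤ εs/2 := le_trans (min_le_right _ _) (min_le_right _ _)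
                simp only [hs']; nlinarith
              · simp only [hs']; linarith
            · intro s hs
              rcases le_or_gt s s₀ with hss | hss
              · -- s ∈ [s', s₀] : window
                have : w s = A * c + B := by
                  have := hwin (s - s₀) (by simp only [hs'] at hs; linarith [hs.1]) (by linarith)
                  have he : q + εs + (s - s₀) = s := by simp only [hεs]; ring
                  rwa [he] at this
                rw [this, ← hws₀2, hws₀]
              · exact hs1 s hss hs.2
          have := csInf_le hMbdd hs'M
          simp only [hs'] at this
          linarith
        -- s₀ = q ⇒ inner claim
        intro s hs
        exact hs1 s (hs₀val ▸ hs.1) hs.2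
      -- w t₁ = c by continuity at q from the right
      have hwt₁ : w t₁ = c := by
        have h1 : Tendsto w (𝓝[>] q) (𝓝 (w q)) :=
          ((hca q hqmem).tendsto).mono_left nhdsWithin_le_nhds
        have h2 : Tendsto w (𝓝[>] q) (𝓝 (w t₁)) := by
          apply Tendsto.congr' _ tendsto_const_nhds
          filter_upwards [Ioo_mem_nhdsGT_of_mem (⟨le_rfl, by linarith⟩ : q ∈ Set.Ico q t₁)]
            with s hs
          exact (inner s ⟨hs.1, hs.2.le⟩).symm
        have := tendsto_nhds_unique h1 h2
        rw [← this, hwq]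
      -- t₁ ∈ T contradiction
      have : t₁ ∈ T := by
        refine ⟨⟨by linarith, hεb⟩, fun s hs => ?_⟩
        rcases le_or_gt s q with hsq | hsq
        · rcases eq_or_lt_of_le hsq with he | hlt
          · rw [he, hwq]
          · exact hq1 s ⟨hs.1, hlt⟩
        · rw [inner s ⟨hsq, hs.2⟩, hwt₁]
      have := le_csSup hTbdd this
      simp only [ht₁] at this
      linarith
  -- Left propagation
  set P := {x | x ∈ Set.Ioc a z ∧ ∀ s ∈ Set.Icc x z, w s = c} with hP
  have hPne : (z - r) ∈ P := ⟨⟨hza, by linarith⟩, fun s hs => hc s ⟨hs.1, by linarith [hs.2]⟩⟩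
  have hPbdd : BddBelow P := ⟨a, fun x hx => hx.1.1.le⟩
  set p := sInf P with hp
  have hpz : p ≤ z - r := csInf_le hPbdd hPne
  have hpa : a ≤ p := le_csInf ⟨_, hPne⟩ (fun x hx => hx.1.1.le)
  have hp1 : ∀ s, p < s → s ≤ z → w s = c := by
    intro s hs hsz
    obtain ⟨x, hx, hxs⟩ := exists_lt_of_csInf_lt ⟨_, hPne⟩ hs
    exact hx.2 s ⟨hxs.le, hsz⟩
  have hpa' : p = a := by
    by_contra hne
    have hpa2 : a < p := lt_of_le_of_ne hpa (Ne.symm hne)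
    have hpmem : p ∈ Set.Ioo a b := ⟨hpa2, by linarith⟩
    have hwp : w p = c := by
      have h1 : Tendsto w (𝓝[>] p) (𝓝 (w p)) :=
        ((hca p hpmem).tendsto).mono_left nhdsWithin_le_nhds
      have h2 : Tendsto w (𝓝[>] p) (𝓝 c) := by
        apply Tendsto.congr' _ tendsto_const_nhds
        filter_upwards [Ioo_mem_nhdsGT_of_mem (⟨le_rfl, by linarith⟩ : p ∈ Set.Ico p z)]
          with s hs
        exact (hp1 s hs.1 hs.2.le).symm
      exact tendsto_nhds_unique h1 h2
    -- w = c on [p, b)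
    have hpb : ∀ s ∈ Set.Ico p b, w s = c := by
      intro s hs
      rcases le_or_gt s z with hsz | hsz
      · rcases eq_or_lt_of_le hs.1 with he | hlt
        · rw [← he, hwp]
        · exact hp1 s hlt hsz
      · exact Rclaim s ⟨by linarith, hs.2⟩ hsz.le
    obtain ⟨ε₀, hε₀, hrel⟩ := h p hpmem
    set ε := min (ε₀/2) ((b - p)/2) with hε
    have hεpos : 0 < ε := lt_min (by linarith) (by linarith)
    have hεlt : ε < ε₀ := lt_of_le_of_lt (min_le_left _ _) (by linarith)
    obtain ⟨A, hA, B, δ, hδ, hrel2⟩ := hrel ε hεpos hεlt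
    set δ₂ := min (δ/2) (min (ε/2) (min ((p - a)/2) ((b - p - ε)/4))) with hδ₂
    have hbpε : 0 < b - p - ε := by
      have : ε ≤ (b - p)/2 := min_le_right _ _
      linarith
    have hδ₂0 : 0 < δ₂ := by
      apply lt_min (by linarith)
      apply lt_min (by linarith)
      exact lt_min (by linarith) (by linarith)
    have hδ₂δ : δ₂ ≤ δ/2 := min_le_left _ _
    have hδ₂ε : δ₂ ≤ ε/2 := le_trans (min_le_right _ _) (min_le_left _ _)
    have hδ₂pa : δ₂ ≤ (p - a)/2 := le_trans (min_le_right _ _) (le_trans (min_le_right _ _) (min_le_left _ _))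
    have hδ₂bp : δ₂ ≤ (b - p - ε)/4 := le_trans (min_le_right _ _) (le_trans (min_le_right _ _) (min_le_right _ _))
    have hwin : ∀ y : ℝ, |y| ≤ δ₂ → w (p + y) = c := by
      intro y hy
      rw [abs_le] at hy
      have hyabs : |y| < δ := by rw [abs_lt]; constructor <;> linarith
      have hm1 : p + y ∈ Set.Ioo a b := ⟨by linarith, by linarith⟩
      have hm2 : p + ε + y ∈ Set.Ioo a b := ⟨by linarith, by linarith⟩
      have heq := hrel2 y hyabs hm1 hm2
      -- w (p + ε + y) = c since p + ε + y ∈ [p, b)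
      have hc1 : w (p + ε + y) = c := hpb _ ⟨by linarith, by linarith⟩
      -- at y = 0 : A c + B = c
      have heq0 := hrel2 0 (by simpa using hδ) (by simpa using hpmem) (by
        simp only [add_zero]; exact ⟨by linarith, by linarith⟩)
      simp only [add_zero] at heq0
      have hc2 : w (p + ε) = c := hpb _ ⟨by linarith, by linarith⟩
      rw [hc2, hwp] at heq0
      rw [hc1] at heq
      -- c = A * w (p+y) + B and c = A * c + B
      have : A * w (p + y) = A * c := by linarith
      exact mul_left_cancel₀ (ne_of_gt hA) this
    -- p - δ₂/2 ∈ P : contradiction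
    have : p - δ₂/2 ∈ P := by
      constructor
      · exact ⟨by linarith, by linarith⟩
      · intro s hs
        rcases le_or_gt s p with hsp | hsp
        · have := hwin (s - p) (by rw [abs_le]; constructor <;> linarith [hs.1])
          rwa [add_sub_cancel] at this
        · exact hp1 s hsp hs.2
    have := csInf_le hPbdd this
    linarith
  -- conclude
  intro t ht
  rcases le_or_gt z t with hzt | htz
  · exact Rclaim t ht hzt
  · exact hp1 t (hpa' ▸ ht.1) htz.le




/-- Given an interior local maximum, `w` is constant on a subinterval. -/
lemma maxcase {a b : ℝ} {w : ℝ → ℝ} (hw : ContinuousOn w (Set.Ioo a b))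
    (h : Hyp a b w) {t₁ t₂ s₀ : ℝ} (h₁ : t₁ ∈ Set.Ioo a b) (h₂ : t₂ ∈ Set.Ioo a b)
    (h₁₂ : t₁ < t₂) (hs₀ : s₀ ∈ Set.Icc t₁ t₂) (hgt : w t₁ < w s₀) (heq : w t₂ = w t₁) :
    ∃ z r c, 0 < r ∧ Set.Icc (z - r) (z + r) ⊆ Set.Ioo a b ∧
      ∀ t ∈ Set.Icc (z - r) (z + r), w t = c := by
  have hIcc : Set.Icc t₁ t₂ ⊆ Set.Ioo a b := fun x hx => ⟨lt_of_lt_of_le h₁.1 hx.1, lt_of_le_of_lt hx.2 h₂.2⟩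
  obtain ⟨ts, htsmem, htsmax⟩ := isCompact_Icc.exists_isMaxOn ⟨s₀, hs₀⟩ (hw.mono hIcc)
  have hts1 : w t₁ < w ts := lt_of_lt_of_le hgt (htsmax hs₀)
  have hts2 : w t₂ < w ts := by rw [heq]; exact hts1
  have htsI : ts ∈ Set.Ioo t₁ t₂ := by
    rcases eq_or_lt_of_le htsmem.1 with he | hl
    · exfalso; rw [← he] at hts1; exact lt_irrefl _ hts1
    · rcases eq_or_lt_of_le htsmem.2 with he | hr
      · exfalso; rw [he] at hts2; exact lt_irrefl _ hts2
      · exact ⟨hl, hr⟩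
  set r₀ := min (ts - t₁) (t₂ - ts) with hr₀
  have hr₀0 : 0 < r₀ := lt_min (by linarith [htsI.1]) (by linarith [htsI.2])
  have hmax : ∀ s : ℝ, |s - ts| < r₀ → w s ≤ w ts := by
    intro s hs
    rw [abs_lt] at hs
    apply htsmax
    constructor
    · have : r₀ ≤ ts - t₁ := min_le_left _ _
      linarith
    · have : r₀ ≤ t₂ - ts := min_le_right _ _
      linarith
  obtain ⟨ε₀, hε₀, hrel⟩ := h ts (hIcc htsmem)
  set η := min ε₀ (b - ts) with hη
  have hη0 : 0 < η := lt_min hε₀ (by linarith [(hIcc htsmem).2])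
  have hηb : ts + η ≤ b := by
    have : η ≤ b - ts := min_le_right _ _
    linarith
  have hIoo2 : Set.Ioo ts (ts + η) ⊆ Set.Ioo a b :=
    fun x hx => ⟨lt_trans (hIcc htsmem).1 hx.1, lt_of_lt_of_le hx.2 hηb⟩
  -- every point of (ts, ts+η) is a local max
  have hlocmax : ∀ τ ∈ Set.Ioo ts (ts + η), ∃ δ > (0:ℝ),
      ∀ s ∈ Set.Ioo ts (ts + η), |s - τ| < δ → w s ≤ w τ := by
    intro τ hτ
    set ε := τ - ts with hε
    have hε0 : 0 < ε := by linarith [hτ.1]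
    have hεε₀ : ε < ε₀ := by
      have : η ≤ ε₀ := min_le_left _ _
      linarith [hτ.2]
    obtain ⟨A, hA, B, δ, hδ, hrel2⟩ := hrel ε hε0 hεε₀
    refine ⟨min δ r₀, lt_min hδ hr₀0, fun s hs hsδ => ?_⟩
    set y := s - τ with hy
    have hyδ : |y| < δ := lt_of_lt_of_le hsδ (min_le_left _ _)
    have hyr : |y| < r₀ := lt_of_lt_of_le hsδ (min_le_right _ _)
    have habs := abs_lt.1 hyr
    have hm1 : ts + y ∈ Set.Ioo a b := by
      apply hIcc
      constructor
      · have : r₀ ≤ ts - t₁ := min_le_left _ _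
        linarith
      · have : r₀ ≤ t₂ - ts := min_le_right _ _
        linarith
    have hm2 : ts + ε + y ∈ Set.Ioo a b := by
      apply hIoo2
      have h1 : ts + ε + y = s := by rw [hε, hy]; ring
      rw [h1]; exact hs
    have e1 := hrel2 y hyδ hm1 hm2
    have hts4 : ts + ε = τ := by rw [hε]; ring
    have e2 := hrel2 0 (by simpa using hδ) (by simpa using hIcc htsmem) (by
      have h9 : ts + ε + 0 = τ := by rw [hε]; ring
      rw [h9]; exact hIoo2 hτ)
    rw [add_zero, add_zero] at e2
    have hts3 : ts + ε + y = s := by rw [hε, hy]; ring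
    rw [hts3] at e1
    rw [hts4] at e2
    rw [e1, e2]
    have : w (ts + y) ≤ w ts := hmax (ts + y) (by simpa using hyr)
    nlinarith
  have hconst := localmax_const (hw.mono hIoo2) hlocmax
  refine ⟨ts + η/2, η/4, w (ts + η/2), by linarith, ?_, ?_⟩
  · intro x hx
    apply hIoo2
    constructor
    · simp only [Set.mem_Icc] at hx; linarith [hx.1]
    · simp only [Set.mem_Icc] at hx; linarith [hx.2]
  · intro t ht
    simp only [Set.mem_Icc] at ht
    have h1 : t ∈ Set.Ioo ts (ts + η) := ⟨by linarith [ht.1], by linarith [ht.2]⟩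
    have h2 : ts + η/2 ∈ Set.Ioo ts (ts + η) := ⟨by linarith, by linarith⟩
    exact hconst t h1 (ts + η/2) h2

lemma exists_const_interval {a b : ℝ} {w : ℝ → ℝ} (hw : ContinuousOn w (Set.Ioo a b))
    (h : Hyp a b w) (hni : ¬ Set.InjOn w (Set.Ioo a b)) :
    ∃ z r c, 0 < r ∧ Set.Icc (z - r) (z + r) ⊆ Set.Ioo a b ∧
      ∀ t ∈ Set.Icc (z - r) (z + r), w t = c := by
  simp only [Set.InjOn, not_forall] at hni
  obtain ⟨t₁, ht₁, t₂, ht₂, hweq, hne⟩ := hni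
  -- wlog t₁ < t₂
  have main : ∀ u v : ℝ, u ∈ Set.Ioo a b → v ∈ Set.Ioo a b → u < v → w u = w v →
      ∃ z r c, 0 < r ∧ Set.Icc (z - r) (z + r) ⊆ Set.Ioo a b ∧
        ∀ t ∈ Set.Icc (z - r) (z + r), w t = c := by
    intro u v hu hv huv hwuv
    by_cases hcst : ∀ s ∈ Set.Icc u v, w s = w u
    · refine ⟨(u + v)/2, (v - u)/2, w u, by linarith, ?_, ?_⟩
      · intro x hx
        simp only [Set.mem_Icc] at hx
        have hx1 : u ≤ x := by linarith [hx.1]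
        have hx2 : x ≤ v := by linarith [hx.2]
        exact ⟨lt_of_lt_of_le hu.1 hx1, lt_of_le_of_lt hx2 hv.2⟩
      · intro t ht
        simp only [Set.mem_Icc] at ht
        exact hcst t ⟨by linarith [ht.1], by linarith [ht.2]⟩
    · push_neg at hcst
      obtain ⟨s₀, hs₀, hs₀ne⟩ := hcst
      rcases lt_or_gt_of_ne hs₀ne with hlt | hgt
      · -- min case : use -w
        have hneg : Hyp a b (fun t => -(w t)) := by
          intro x hx
          obtain ⟨ε₀, hε₀, hrel⟩ := h x hx
          refine ⟨ε₀, hε₀, fun ε hε hε' => ?_⟩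
          obtain ⟨A, hA, B, δ, hδ, hrel2⟩ := hrel ε hε hε'
          exact ⟨A, hA, -B, δ, hδ, fun y hy h1 h2 => by
            have := hrel2 y hy h1 h2; simp only []; rw [this]; ring⟩
        obtain ⟨z, r, c, hr, hss, hcc⟩ := maxcase hw.neg hneg hu hv huv hs₀
          (by simpa using hlt) (by simpa using congrArg Neg.neg hwuv.symm)
        exact ⟨z, r, -c, hr, hss, fun t ht => by
          have h2 : -(w t) = c := by simpa using hcc t ht
          linarith⟩
      · exact maxcase hw h hu hv huv hs₀ hgt hwuv.symm
  rcases lt_trichotomy t₁ t₂ with hlt | heqq | hgt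
  · exact main t₁ t₂ ht₁ ht₂ hlt hweq
  · exact absurd heqq hne
  · exact main t₂ t₁ ht₂ ht₁ hgt hweq.symm

lemma baire_step {α β : ℝ} (hab : α < β) {F : ℕ → ℝ → ℝ} {f : ℝ → ℝ}
    (hF : ∀ n, ContinuousOn (F n) (Set.Icc α β))
    (hconv : ∀ x ∈ Set.Icc α β, Tendsto (fun n => F n x) atTop (𝓝 (f x)))
    {ε : ℝ} (hε : 0 < ε) :
    ∃ α' β', α < α' ∧ α' < β' ∧ β' < β ∧
      ∀ x ∈ Set.Icc α' β', ∀ y ∈ Set.Icc α' β', |f x - f y| ≤ ε := by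
  classical
  set E : ℕ → Set ℝ := fun m => {x | x ∈ Set.Icc α β ∧ ∀ p q : ℕ, |F (p+m) x - F (q+m) x| ≤ ε/4} with hE
  have hEclosed : ∀ m, IsClosed (E m) := by
    intro m
    have : E m = ⋂ (p:ℕ), ⋂ (q:ℕ),
        (Set.Icc α β ∩ (fun x => |F (p+m) x - F (q+m) x|) ⁻¹' (Set.Iic (ε/4))) := by
      ext x
      simp only [Set.mem_iInter, Set.mem_inter_iff, Set.mem_preimage, Set.mem_Iic, hE,
        Set.mem_setOf_eq]
      constructor
      · rintro ⟨h1, h2⟩ p q; exact ⟨h1, h2 p q⟩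
      · intro h1
        exact ⟨(h1 0 0).1, fun p q => (h1 p q).2⟩
    rw [this]
    exact isClosed_iInter (fun p => isClosed_iInter (fun q =>
      (((hF (p+m)).sub (hF (q+m))).abs).preimage_isClosed_of_isClosed isClosed_Icc isClosed_Iic))
  have hcover : ∀ x ∈ Set.Icc α β, ∃ m, x ∈ E m := by
    intro x hx
    obtain ⟨N, hN⟩ := Metric.tendsto_atTop.1 (hconv x hx) (ε/8) (by linarith)
    refine ⟨N, hx, fun p q => ?_⟩
    have h1 := hN (p+N) (by omega)
    have h2 := hN (q+N) (by omega)
    rw [Real.dist_eq] at h1 h2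
    have he : F (p+N) x - F (q+N) x = (F (p+N) x - f x) - (F (q+N) x - f x) := by ring
    rw [he]
    have h3 := abs_sub (F (p+N) x - f x) (F (q+N) x - f x)
    linarith
  set C : ℕ → Set ℝ := fun n => Nat.casesOn n (Set.Iic α ∪ Set.Ici β) E with hC
  have hCclosed : ∀ n, IsClosed (C n) := by
    intro n; cases n with
    | zero => exact isClosed_Iic.union isClosed_Ici
    | succ m => exact hEclosed m
  have hCcover : ⋃ n, C n = Set.univ := by
    ext x; simp only [Set.mem_iUnion, Set.mem_univ, iff_true]
    rcases le_or_gt x α with h1 | h1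
    · exact ⟨0, Or.inl h1⟩
    · rcases le_or_gt β x with h2 | h2
      · exact ⟨0, Or.inr h2⟩
      · obtain ⟨m, hm⟩ := hcover x ⟨h1.le, h2.le⟩
        exact ⟨m+1, hm⟩
  have hdense := dense_iUnion_interior_of_closed hCclosed hCcover
  obtain ⟨x₀, hx₀mem, hx₀⟩ := hdense.exists_mem_open isOpen_Ioo (nonempty_Ioo.2 hab)
  obtain ⟨n, hn⟩ := Set.mem_iUnion.1 hx₀mem
  have hn' : ∃ m, x₀ ∈ interior (E m) := by
    cases n with
    | zero =>
      exfalso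
      rcases interior_subset hn with h | h
      · exact absurd hx₀.1 (not_lt.2 h)
      · exact absurd hx₀.2 (not_lt.2 h)
    | succ m => exact ⟨m, hn⟩
  obtain ⟨m, hm⟩ := hn'
  obtain ⟨r, hr0, hball⟩ := Metric.mem_nhds_iff.1 (mem_interior_iff_mem_nhds.1 hm)
  set r₂ := min (r/2) (min ((x₀ - α)/2) ((β - x₀)/2)) with hr₂
  have hr₂0 : 0 < r₂ := lt_min (by linarith) (lt_min (by linarith [hx₀.1]) (by linarith [hx₀.2]))
  have hr₂r : r₂ ≤ r/2 := min_le_left _ _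
  have hr₂α : r₂ ≤ (x₀ - α)/2 := le_trans (min_le_right _ _) (min_le_left _ _)
  have hr₂β : r₂ ≤ (β - x₀)/2 := le_trans (min_le_right _ _) (min_le_right _ _)
  have hsub : Set.Icc (x₀ - r₂) (x₀ + r₂) ⊆ E m := by
    intro x hx
    apply hball
    simp only [Metric.mem_ball, Real.dist_eq]
    simp only [Set.mem_Icc] at hx
    rw [abs_lt]; constructor <;> [linarith [hx.1]; linarith [hx.2]]
  have hfm : ∀ x ∈ Set.Icc (x₀ - r₂) (x₀ + r₂), |f x - F m x| ≤ ε/4 := by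
    intro x hx
    have hxE := hsub hx
    have hlim : Tendsto (fun p => |F (p+m) x - F (0+m) x|) atTop (𝓝 (|f x - F (0+m) x|)) := by
      apply Filter.Tendsto.abs
      exact Filter.Tendsto.sub_const ((hconv x hxE.1).comp (tendsto_add_atTop_nat m)) _
    have hle : ∀ p, |F (p+m) x - F (0+m) x| ≤ ε/4 := fun p => hxE.2 p 0
    have := le_of_tendsto hlim (Filter.Eventually.of_forall hle)
    simpa using this
  have hcont : ContinuousAt (F m) x₀ := by
    have h1 : ContinuousWithinAt (F m) (Set.Icc α β) x₀ := (hF m) x₀ ⟨hx₀.1.le, hx₀.2.le⟩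
    exact h1.continuousAt (Icc_mem_nhds hx₀.1 hx₀.2)
  obtain ⟨δ₃, hδ₃0, hδ₃⟩ := Metric.continuousAt_iff.1 hcont (ε/4) (by linarith)
  set r₃ := min r₂ (δ₃/2) with hr₃
  have hr₃0 : 0 < r₃ := lt_min hr₂0 (by linarith)
  have hr₃2 : r₃ ≤ r₂ := min_le_left _ _
  have hr₃δ : r₃ ≤ δ₃/2 := min_le_right _ _
  refine ⟨x₀ - r₃, x₀ + r₃, by linarith, by linarith, by linarith, ?_⟩
  intro x hx y hy
  simp only [Set.mem_Icc] at hx hy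
  have hxm : x ∈ Set.Icc (x₀ - r₂) (x₀ + r₂) := ⟨by linarith [hx.1], by linarith [hx.2]⟩
  have hym : y ∈ Set.Icc (x₀ - r₂) (x₀ + r₂) := ⟨by linarith [hy.1], by linarith [hy.2]⟩
  have h1 := hfm x hxm
  have h2 := hfm y hym
  have h3 : dist x x₀ < δ₃ := by
    rw [Real.dist_eq, abs_lt]; constructor <;> [linarith [hx.1]; linarith [hx.2]]
  have h4 : dist y x₀ < δ₃ := by
    rw [Real.dist_eq, abs_lt]; constructor <;> [linarith [hy.1]; linarith [hy.2]]
  have h5 := hδ₃ h3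
  have h6 := hδ₃ h4
  rw [Real.dist_eq] at h5 h6
  have a1 := abs_sub_le (f x) (F m x) (f y)
  have a2 := abs_sub_le (F m x) (F m x₀) (f y)
  have a3 := abs_sub_le (F m x₀) (F m y) (f y)
  have c1 : |F m x₀ - F m y| = |F m y - F m x₀| := abs_sub_comm _ _
  have c2 : |F m y - f y| = |f y - F m y| := abs_sub_comm _ _
  linarith

lemma baire_cont {α β : ℝ} (hab : α < β) {F : ℕ → ℝ → ℝ} {f : ℝ → ℝ}
    (hF : ∀ n, ContinuousOn (F n) (Set.Icc α β))
    (hconv : ∀ x ∈ Set.Icc α β, Tendsto (fun n => F n x) atTop (𝓝 (f x))) :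
    ∃ x ∈ Set.Ioo α β, ContinuousAt f x := by
  classical
  have key : ∀ p : ℝ × ℝ, α ≤ p.1 → p.1 < p.2 → p.2 ≤ β → ∀ k : ℕ, ∃ q : ℝ × ℝ,
      p.1 < q.1 ∧ q.1 < q.2 ∧ q.2 < p.2 ∧
      ∀ x ∈ Set.Icc q.1 q.2, ∀ y ∈ Set.Icc q.1 q.2, |f x - f y| ≤ (1/2:ℝ)^k := by
    intro p h1 h2 h3 k
    have hsub : Set.Icc p.1 p.2 ⊆ Set.Icc α β := Set.Icc_subset_Icc h1 h3
    obtain ⟨α', β', ha', hab', hb', hosc⟩ := baire_step h2 (F := F) (f := f)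
      (fun n => (hF n).mono hsub) (fun x hx => hconv x (hsub hx))
      (pow_pos (by norm_num : (0:ℝ) < 1/2) k)
    exact ⟨(α', β'), ha', hab', hb', hosc⟩
  set Inv : ℕ → ℝ × ℝ → Prop := fun k p => α ≤ p.1 ∧ p.1 < p.2 ∧ p.2 ≤ β ∧
    ∀ x ∈ Set.Icc p.1 p.2, ∀ y ∈ Set.Icc p.1 p.2, |f x - f y| ≤ (1/2:ℝ)^k with hInv
  have step : ∀ (k : ℕ) (p : ℝ × ℝ), Inv k p →
      ∃ q : ℝ × ℝ, Inv (k+1) q ∧ p.1 < q.1 ∧ q.2 < p.2 := by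
    intro k p hp
    obtain ⟨q, hq1, hq2, hq3, hq4⟩ := key p hp.1 hp.2.1 hp.2.2.1 (k+1)
    exact ⟨q, ⟨le_trans hp.1 hq1.le, hq2, le_trans hq3.le hp.2.2.1, hq4⟩, hq1, hq3⟩
  obtain ⟨p₀, hp₀, hl₀, hr₀⟩ : ∃ p₀, Inv 0 p₀ ∧ α < p₀.1 ∧ p₀.2 < β := by
    obtain ⟨q, hq1, hq2, hq3, hq4⟩ := key (α, β) le_rfl hab le_rfl 0
    exact ⟨q, ⟨hq1.le, hq2, hq3.le, hq4⟩, hq1, hq3⟩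
  let T : ℕ → Type := fun k => {p : ℝ × ℝ // Inv k p}
  let next : ∀ k, T k → T (k+1) := fun k p =>
    ⟨Classical.choose (step k p.1 p.2), (Classical.choose_spec (step k p.1 p.2)).1⟩
  let seq : ∀ k, T k := fun k => Nat.rec ⟨p₀, hp₀⟩ next k
  have hseq : ∀ k, seq (k+1) = next k (seq k) := fun k => rfl
  set A : ℕ → ℝ := fun k => (seq k).1.1 with hA
  set Bs : ℕ → ℝ := fun k => (seq k).1.2 with hBs
  have hnest : ∀ k, A k < A (k+1) ∧ Bs (k+1) < Bs k := by
    intro k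
    have h2 := (Classical.choose_spec (step k (seq k).1 (seq k).2)).2
    exact h2
  have hAmono : StrictMono A := strictMono_nat_of_lt_succ (fun k => (hnest k).1)
  have hBanti : StrictAnti Bs := strictAnti_nat_of_succ_lt (fun k => (hnest k).2)
  have hAB : ∀ k, A k < Bs k := fun k => (seq k).2.2.1
  have hABkj : ∀ k j, A k < Bs j := by
    intro k j
    rcases le_total k j with h | h
    · exact lt_of_le_of_lt (hAmono.monotone h) (hAB j)
    · exact lt_of_lt_of_le (hAB k) (hBanti.antitone h)
  have hbdd : BddAbove (Set.range A) := ⟨Bs 0, by rintro x ⟨k, rfl⟩; exact (hABkj k 0).le⟩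
  set x₁ := ⨆ k, A k with hx₁
  have hxA : ∀ k, A k ≤ x₁ := fun k => le_ciSup hbdd k
  have hxB : ∀ k, x₁ ≤ Bs k := fun k => ciSup_le (fun j => (hABkj j k).le)
  have hxIoo : ∀ k, x₁ ∈ Set.Ioo (A k) (Bs k) := fun k =>
    ⟨lt_of_lt_of_le (hnest k).1 (hxA (k+1)), lt_of_le_of_lt (hxB (k+1)) (hnest k).2⟩
  have hA0 : A 0 = p₀.1 := rfl
  have hB0 : Bs 0 = p₀.2 := rfl
  refine ⟨x₁, ⟨lt_trans (hA0 ▸ hl₀) (hxIoo 0).1, lt_trans (hxIoo 0).2 (hB0 ▸ hr₀)⟩, ?_⟩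
  rw [Metric.continuousAt_iff]
  intro ε hε
  obtain ⟨k, hk⟩ := exists_pow_lt_of_lt_one hε (by norm_num : (1:ℝ)/2 < 1)
  refine ⟨min (x₁ - A k) (Bs k - x₁),
    lt_min (by linarith [(hxIoo k).1]) (by linarith [(hxIoo k).2]), ?_⟩
  intro y hy
  rw [Real.dist_eq, abs_lt] at hy
  have h1 : min (x₁ - A k) (Bs k - x₁) ≤ x₁ - A k := min_le_left _ _
  have h2 : min (x₁ - A k) (Bs k - x₁) ≤ Bs k - x₁ := min_le_right _ _
  have hymem : y ∈ Set.Icc (A k) (Bs k) := ⟨by linarith [hy.1], by linarith [hy.2]⟩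
  have hxmem : x₁ ∈ Set.Icc (A k) (Bs k) := ⟨(hxA k), (hxB k)⟩
  have hosc := (seq k).2.2.2.2 y hymem x₁ hxmem
  rw [Real.dist_eq]
  exact lt_of_le_of_lt hosc hk




set_option maxHeartbeats 3000000 in
lemma main_mono {a b : ℝ} {w : ℝ → ℝ} (hab : a < b) (hw : ContinuousOn w (Set.Ioo a b))
    (h : Hyp a b w) (hm : StrictMonoOn w (Set.Ioo a b)) :
    (∃ c₁ c₂ c₃ : ℝ, ∀ x ∈ Set.Ioo a b, w x = c₁ * Real.exp (c₂ * x) + c₃) ∨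
    (∃ c₁ c₂ : ℝ, ∀ x ∈ Set.Ioo a b, w x = c₁ * x + c₂) := by
  classical
  have hca : ∀ t ∈ Set.Ioo a b, ContinuousAt w t := fun t ht =>
    hw.continuousAt (Ioo_mem_nhds ht.1 ht.2)
  -- a.e. differentiability seed via monotone clamp
  have hdd : ∀ α' β', a < α' → α' < β' → β' < b → ∃ d ∈ Set.Ioo α' β', DifferentiableAt ℝ w d := by
    intro α' β' h1 h2 h3
    set g : ℝ → ℝ := fun x => w (max α' (min x β')) with hg
    have hmono : Monotone g := by
      intro x y hxy
      have hc1 : max α' (min x β') ∈ Set.Ioo a b :=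
        ⟨lt_of_lt_of_le h1 (le_max_left _ _),
         lt_of_le_of_lt (max_le (by linarith) (le_trans (min_le_right _ _) (by linarith))) (lt_of_le_of_lt le_rfl h3)⟩
      have hc2 : max α' (min y β') ∈ Set.Ioo a b :=
        ⟨lt_of_lt_of_le h1 (le_max_left _ _),
         lt_of_le_of_lt (max_le (by linarith) (le_trans (min_le_right _ _) (by linarith))) (lt_of_le_of_lt le_rfl h3)⟩
      exact (hm.monotoneOn) hc1 hc2 (max_le_max le_rfl (min_le_min hxy le_rfl))
    have hae := hmono.ae_differentiableAt
    have hvol : (MeasureTheory.volume (Set.Ioo α' β')) ≠ 0 := by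
      rw [Real.volume_Ioo]
      simp only [ne_eq, ENNReal.ofReal_eq_zero, not_le]
      linarith
    have hex : ∃ d ∈ Set.Ioo α' β', DifferentiableAt ℝ g d := by
      by_contra hno
      push_neg at hno
      apply hvol
      apply MeasureTheory.measure_mono_null (fun d hd => ?_) (MeasureTheory.ae_iff.1 hae)
      exact hno d hd
    obtain ⟨d, hd, hdg⟩ := hex
    refine ⟨d, hd, ?_⟩
    have hev : g =ᶠ[𝓝 d] w := by
      filter_upwards [Ioo_mem_nhds hd.1 hd.2] with x hx
      have : max α' (min x β') = x := by
        rw [min_eq_left hx.2.le, max_eq_right hx.1.le]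
      rw [hg]; simp only [this]
    exact (Filter.EventuallyEq.differentiableAt_iff hev).1 hdg
  -- differentiability everywhere by backward propagation
  have hdiff : ∀ t ∈ Set.Ioo a b, DifferentiableAt ℝ w t := by
    intro t ht
    obtain ⟨ε₀, hε₀, hrel⟩ := h t ht
    set η := min ε₀ (b - t) with hη
    have hη0 : 0 < η := lt_min hε₀ (by linarith [ht.2])
    obtain ⟨d, hd, hdiffd⟩ := hdd (t + η/4) (t + η/2) (by linarith [ht.1]) (by linarith)
      (by have : η ≤ b - t := min_le_right _ _; linarith)
    set ε := d - t with hε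
    have hε1 : 0 < ε := by simp only [hε]; linarith [hd.1]
    have hε2 : ε < ε₀ := by
      have h5 : η ≤ ε₀ := min_le_left _ _
      simp only [hε]; linarith [hd.2]
    obtain ⟨A, hA, B, δ, hδ, hrel2⟩ := hrel ε hε1 hε2
    have hdmem : d ∈ Set.Ioo a b := by
      have : η ≤ b - t := min_le_right _ _
      exact ⟨by linarith [hd.1, ht.1], by linarith [hd.2]⟩
    have hev : ∀ᶠ s in 𝓝 t, w s = (w (s + ε) - B)/A := by
      have h1 : ∀ᶠ s in 𝓝 t, |s - t| < δ := by
        have := Metric.ball_mem_nhds t hδ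
        filter_upwards [this] with s hs
        rwa [Metric.mem_ball, Real.dist_eq] at hs
      have h2 : ∀ᶠ s in 𝓝 t, s ∈ Set.Ioo a b := Ioo_mem_nhds ht.1 ht.2
      have h3 : ∀ᶠ s in 𝓝 t, s + ε ∈ Set.Ioo a b := by
        have hcont2 : ContinuousAt (fun s : ℝ => s + ε) t := by fun_prop
        have : t + ε ∈ Set.Ioo a b := by
          have he : t + ε = d := by simp only [hε]; ring
          rw [he]; exact hdmem
        exact hcont2 (isOpen_Ioo.mem_nhds this)
      filter_upwards [h1, h2, h3] with s hs1 hs2 hs3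
      have := hrel2 (s - t) hs1 (by rw [show t + (s - t) = s by ring]; exact hs2)
        (by rw [show t + ε + (s - t) = s + ε by ring]; exact hs3)
      rw [show t + ε + (s - t) = s + ε by ring, show t + (s - t) = s by ring] at this
      rw [this]
      field_simp
      ring
    have hd2 : DifferentiableAt ℝ (fun s => (w (s + ε) - B)/A) t := by
      apply DifferentiableAt.div_const
      apply DifferentiableAt.sub_const
      have hcomp : DifferentiableAt ℝ (w ∘ (fun s => s + ε)) t := by
        apply DifferentiableAt.comp
        · rw [show t + ε = d by simp only [hε]; ring]; exact hdiffd
        · fun_prop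
      exact hcomp
    exact (Filter.EventuallyEq.differentiableAt_iff hev).2 hd2
  set g : ℝ → ℝ := deriv w with hgdef
  have hasd : ∀ t ∈ Set.Ioo a b, HasDerivAt w (g t) t := fun t ht =>
    (hdiff t ht).hasDerivAt
  -- derivative relation
  have hgrel : ∀ t ∈ Set.Ioo a b, ∀ ε A B δ : ℝ, 0 < A → 0 < δ →
      (∀ y : ℝ, |y| < δ → t + y ∈ Set.Ioo a b → t + ε + y ∈ Set.Ioo a b →
        w (t + ε + y) = A * w (t + y) + B) →
      ∀ y : ℝ, |y| < δ → t + y ∈ Set.Ioo a b → t + ε + y ∈ Set.Ioo a b →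
        g (t + ε + y) = A * g (t + y) := by
    intro t ht ε A B δ hA hδ hrel2 y hy hm1 hm2
    set s₀ := t + y with hs₀
    have hev : ∀ᶠ s in 𝓝 s₀, w (s + ε) = A * w s + B := by
      have h1 : ∀ᶠ s in 𝓝 s₀, |s - t| < δ := by
        have hopen : IsOpen {s : ℝ | |s - t| < δ} := by
          have : {s : ℝ | |s - t| < δ} = Metric.ball t δ := by
            ext s; simp [Metric.mem_ball, Real.dist_eq]
          rw [this]; exact Metric.isOpen_ball
        exact hopen.mem_nhds (by simpa [hs₀] using hy)
      have h2 : ∀ᶠ s in 𝓝 s₀, s ∈ Set.Ioo a b := Ioo_mem_nhds hm1.1 hm1.2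
      have h3 : ∀ᶠ s in 𝓝 s₀, s + ε ∈ Set.Ioo a b := by
        have hcont2 : ContinuousAt (fun s : ℝ => s + ε) s₀ := by fun_prop
        apply hcont2
        apply isOpen_Ioo.mem_nhds
        show s₀ + ε ∈ Set.Ioo a b
        rw [hs₀, show t + y + ε = t + ε + y by ring]; exact hm2
      filter_upwards [h1, h2, h3] with s hs1 hs2 hs3
      have := hrel2 (s - t) hs1 (by rw [show t + (s - t) = s by ring]; exact hs2)
        (by rw [show t + ε + (s - t) = s + ε by ring]; exact hs3)
      rwa [show t + ε + (s - t) = s + ε by ring, show t + (s - t) = s by ring] at this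
    have hld : HasDerivAt (fun s => w (s + ε)) (g (s₀ + ε)) s₀ := by
      have h5 : HasDerivAt (fun s : ℝ => s + ε) 1 s₀ := (hasDerivAt_id s₀).add_const ε
      have h6 : HasDerivAt w (g (s₀ + ε)) (s₀ + ε) := hasd (s₀ + ε) (by
        rw [show s₀ + ε = t + ε + y by rw [hs₀]; ring]; exact hm2)
      have := HasDerivAt.comp s₀ h6 h5
      rw [mul_one] at this
      exact this
    have hrd : HasDerivAt (fun s => A * w s + B) (A * g s₀) s₀ :=
      ((hasd s₀ hm1).const_mul A).add_const B
    have hld2 : HasDerivAt (fun s => A * w s + B) (g (s₀ + ε)) s₀ := by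
      apply hld.congr_of_eventuallyEq
      filter_upwards [hev] with s hs
      exact hs.symm
    have := hld2.unique hrd
    rw [show t + ε + y = s₀ + ε by rw [hs₀]; ring]
    exact this
  -- derivative nonnegative
  have hg0 : ∀ t ∈ Set.Ioo a b, 0 ≤ g t := by
    intro t ht
    have htend : Tendsto (slope w t) (𝓝[>] t) (𝓝 (g t)) := by
      apply (hasDerivAt_iff_tendsto_slope.1 (hasd t ht)).mono_left
      apply nhdsWithin_mono
      intro x hx
      exact ne_of_gt hx
    apply ge_of_tendsto htend
    filter_upwards [Ioo_mem_nhdsGT_of_mem (⟨le_rfl, ht.2⟩ : t ∈ Set.Ico t b)] with s hs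
    rw [slope_def_field]
    apply div_nonneg _ (by linarith [hs.1])
    have : w t < w s := hm ht ⟨lt_trans ht.1 hs.1, hs.2⟩ hs.1
    linarith
  -- derivative nonvanishing
  have hgne : ∀ t ∈ Set.Ioo a b, g t ≠ 0 := by
    intro t ht hzero
    obtain ⟨ε₀, hε₀, hrel⟩ := h t ht
    set η := min ε₀ (b - t) with hη
    have hη0 : 0 < η := lt_min hε₀ (by linarith [ht.2])
    have hηb : t + η ≤ b := by have : η ≤ b - t := min_le_right _ _; linarith
    have hgz : ∀ τ ∈ Set.Ioo t (t + η), g τ = 0 := by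
      intro τ hτ
      set ε := τ - t with hε
      have hε1 : 0 < ε := by simp only [hε]; linarith [hτ.1]
      have hε2 : ε < ε₀ := by
        have : η ≤ ε₀ := min_le_left _ _
        simp only [hε]; linarith [hτ.2]
      obtain ⟨A, hA, B, δ, hδ, hrel2⟩ := hrel ε hε1 hε2
      have h0 := hgrel t ht ε A B δ hA hδ hrel2 0 (by simpa using hδ)
        (by simpa using ht) (by
          rw [add_zero, show t + ε = τ by rw [hε]; ring]
          exact ⟨by linarith [hτ.1, ht.1], by linarith [hτ.2]⟩)
      rw [add_zero, add_zero, show t + ε = τ by rw [hε]; ring] at h0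
      rw [h0, hzero, mul_zero]
    -- contradiction with strict monotonicity via MVT
    have hmvt := exists_hasDerivAt_eq_slope w g (by linarith : t + η/4 < t + η/2)
      (fun x hx => (hca x ⟨by linarith [ht.1, hx.1], by linarith [hx.2]⟩).continuousWithinAt)
      (fun x hx => hasd x ⟨by linarith [ht.1, hx.1], by linarith [hx.2]⟩)
    obtain ⟨ξ, hξ, hξeq⟩ := hmvt
    have hgξ : g ξ = 0 := hgz ξ ⟨by linarith [hξ.1], by linarith [hξ.2]⟩
    rw [hgξ] at hξeq
    have hne : w (t + η/4) < w (t + η/2) := hm ⟨by linarith [ht.1], by linarith⟩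
      ⟨by linarith [ht.1], by linarith⟩ (by linarith)
    have h9 : (0:ℝ) = (w (t + η/2) - w (t + η/4)) / (t + η/2 - (t + η/4)) := hξeq
    have h10 : t + η/2 - (t + η/4) = η/4 := by ring
    rw [h10] at h9
    rcases div_eq_zero_iff.1 h9.symm with h11 | h11
    · linarith
    · linarith
  have hgpos : ∀ t ∈ Set.Ioo a b, 0 < g t := fun t ht =>
    lt_of_le_of_ne (hg0 t ht) (Ne.symm (hgne t ht))
  -- continuity of the derivative
  have hcontg : ∀ t ∈ Set.Ioo a b, ContinuousAt g t := by
    intro t ht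
    obtain ⟨ε₀, hε₀, hrel⟩ := h t ht
    set η := min ε₀ (b - t) with hη
    have hη0 : 0 < η := lt_min hε₀ (by linarith [ht.2])
    have hηε₀ : η ≤ ε₀ := min_le_left _ _
    have hηb : η ≤ b - t := min_le_right _ _
    set α' := t + η/4 with hα'
    set β' := t + η/2 with hβ'
    have hαβ : α' < β' := by simp only [hα', hβ']; linarith
    have hsubI : Set.Icc α' β' ⊆ Set.Ioo a b := by
      intro x hx
      simp only [Set.mem_Icc, hα', hβ'] at hx
      exact ⟨by linarith [ht.1, hx.1], by linarith [hx.2]⟩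
    set r₀ := (b - β')/2 with hr₀
    have hr₀0 : 0 < r₀ := by simp only [hr₀, hβ']; linarith
    set Fn : ℕ → ℝ → ℝ := fun n x => (w (x + r₀/(n+1)) - w x)/(r₀/(n+1)) with hFn
    have hFcont : ∀ n, ContinuousOn (Fn n) (Set.Icc α' β') := by
      intro n
      have hpos : (0:ℝ) < r₀/(n+1) := by positivity
      apply ContinuousOn.div_const
      apply ContinuousOn.sub
      · apply ContinuousOn.comp hw (Continuous.continuousOn (by fun_prop))
        intro x hx
        simp only [Set.mem_Icc] at hx
        have h8 : r₀/(n+1) ≤ r₀ := by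
          rw [div_le_iff₀ (by positivity)]
          nlinarith [hr₀0]
        constructor
        · have := (hsubI hx).1; simp only [Set.mem_Ioo] at this ⊢; linarith [hpos]
        · simp only [hr₀] at h8 ⊢
          have hxβ : x ≤ β' := hx.2
          simp only [hβ'] at hxβ ⊢
          linarith
      · exact hw.mono hsubI
    have hFconv : ∀ x ∈ Set.Icc α' β', Tendsto (fun n => Fn n x) atTop (𝓝 (g x)) := by
      intro x hx
      have hslope := hasDerivAt_iff_tendsto_slope.1 (hasd x (hsubI hx))
      have htt : Tendsto (fun n : ℕ => x + r₀/(n+1)) atTop (𝓝[≠] x) := by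
        apply tendsto_nhdsWithin_of_tendsto_nhds_of_eventually_within
        · have : Tendsto (fun n : ℕ => r₀/(n+1)) atTop (𝓝 0) := by
            have h2 : Tendsto (fun n : ℕ => r₀ * (1/(n+1))) atTop (𝓝 (r₀ * 0)) :=
              tendsto_const_nhds.mul tendsto_one_div_add_atTop_nhds_zero_nat
            simpa [div_eq_mul_inv, one_div] using h2
          have h3 := tendsto_const_nhds (x := x) (f := atTop (α := ℕ)) |>.add this
          simpa using h3
        · apply Filter.Eventually.of_forall
          intro n
          have hpos : (0:ℝ) < r₀/(n+1) := by positivity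
          simp only [Set.mem_compl_iff, Set.mem_singleton_iff]
          intro hcontra
          nlinarith [hcontra]
      have := hslope.comp htt
      apply this.congr
      intro n
      have hpos : (0:ℝ) < r₀/(n+1) := by positivity
      simp only [Function.comp_apply, slope_def_field, hFn]
      rw [add_sub_cancel_left]
    obtain ⟨x₁, hx₁, hcx₁⟩ := baire_cont hαβ hFcont hFconv
    -- backward transfer
    set ε := x₁ - t with hε
    have hε1 : 0 < ε := by
      simp only [hε]
      have := hx₁.1; simp only [hα'] at this; linarith
    have hε2 : ε < ε₀ := by
      simp only [hε]
      have := hx₁.2; simp only [hβ'] at this; linarith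
    obtain ⟨A, hA, B, δ, hδ, hrel2⟩ := hrel ε hε1 hε2
    have hgr := hgrel t ht ε A B δ hA hδ hrel2
    have hx₁mem : x₁ ∈ Set.Ioo a b := hsubI ⟨hx₁.1.le, hx₁.2.le⟩
    have hev : ∀ᶠ s in 𝓝 t, g s = g (s + ε) / A := by
      have h1 : ∀ᶠ s in 𝓝 t, |s - t| < δ := by
        filter_upwards [Metric.ball_mem_nhds t hδ] with s hs
        rwa [Metric.mem_ball, Real.dist_eq] at hs
      have h2 : ∀ᶠ s in 𝓝 t, s ∈ Set.Ioo a b := Ioo_mem_nhds ht.1 ht.2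
      have h3 : ∀ᶠ s in 𝓝 t, s + ε ∈ Set.Ioo a b := by
        have hcont2 : ContinuousAt (fun s : ℝ => s + ε) t := by fun_prop
        apply hcont2
        apply isOpen_Ioo.mem_nhds
        show t + ε ∈ Set.Ioo a b
        rw [show t + ε = x₁ by rw [hε]; ring]
        exact hx₁mem
      filter_upwards [h1, h2, h3] with s hs1 hs2 hs3
      have := hgr (s - t) hs1 (by rw [show t + (s - t) = s by ring]; exact hs2)
        (by rw [show t + ε + (s - t) = s + ε by ring]; exact hs3)
      rw [show t + ε + (s - t) = s + ε by ring, show t + (s - t) = s by ring] at this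
      rw [this]
      field_simp
    have hc2 : ContinuousAt (fun s => g (s + ε) / A) t := by
      have hcomp : ContinuousAt (g ∘ (fun s : ℝ => s + ε)) t := by
        apply ContinuousAt.comp
        · show ContinuousAt g (t + ε)
          rw [show t + ε = x₁ by rw [hε]; ring]; exact hcx₁
        · fun_prop
      have h7 : ContinuousAt (fun s : ℝ => g (s + ε)) t := hcomp
      exact h7.div_const A
    exact hc2.congr (by filter_upwards [hev] with s hs; exact hs.symm)
  -- logarithm of the derivative
  set u : ℝ → ℝ := fun t => Real.log (g t) with hudef
  have hcontu : ∀ t ∈ Set.Ioo a b, ContinuousAt u t := fun t ht =>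
    (Real.continuousAt_log (ne_of_gt (hgpos t ht))).comp (hcontg t ht)
  have hurel : ∀ t ∈ Set.Ioo a b, ∀ ε A B δ : ℝ, 0 < A → 0 < δ →
      (∀ y : ℝ, |y| < δ → t + y ∈ Set.Ioo a b → t + ε + y ∈ Set.Ioo a b →
        w (t + ε + y) = A * w (t + y) + B) →
      ∀ y : ℝ, |y| < δ → t + y ∈ Set.Ioo a b → t + ε + y ∈ Set.Ioo a b →
        u (t + ε + y) = u (t + y) + Real.log A := by
    intro t ht ε A B δ hA hδ hrel2 y hy hm1 hm2
    have hrel3 := hgrel t ht ε A B δ hA hδ hrel2 y hy hm1 hm2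
    simp only [hudef]
    rw [hrel3, Real.log_mul (ne_of_gt hA) (ne_of_gt (hgpos _ hm1))]
    ring
  -- locally affine (one-sided and two-sided)
  have hS9 : ∀ t₀ ∈ Set.Ioo a b, ∃ c η δ' : ℝ, 0 < η ∧ t₀ + η ≤ b ∧ 0 < δ' ∧
      (∀ ε, 0 ≤ ε → ε < η → u (t₀ + ε) = u t₀ + c * ε) ∧
      (∀ y, |y| < δ' → u (t₀ + y) = u t₀ + c * y) := by
    intro t₀ ht₀
    obtain ⟨ε₀, hε₀, hrel⟩ := h t₀ ht₀
    set η := min ε₀ (b - t₀) with hη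
    have hη0 : 0 < η := lt_min hε₀ (by linarith [ht₀.2])
    have hηε₀ : η ≤ ε₀ := min_le_left _ _
    have hηb : η ≤ b - t₀ := min_le_right _ _
    set f : ℝ → ℝ := fun ε => u (t₀ + ε) - u t₀ with hf
    have hf0 : f 0 = 0 := by simp [hf]
    have hmem : ∀ ε, 0 ≤ ε → ε < η → t₀ + ε ∈ Set.Ioo a b := fun ε h1 h2 =>
      ⟨by linarith [ht₀.1], by linarith⟩
    have hfc : ∀ ε, 0 ≤ ε → ε < η → ContinuousAt f ε := by
      intro ε h1 h2
      have hcomp : ContinuousAt (u ∘ (fun e : ℝ => t₀ + e)) ε :=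
        ContinuousAt.comp (hcontu (t₀ + ε) (hmem ε h1 h2)) (by fun_prop)
      have h3 : ContinuousAt (fun e : ℝ => u (t₀ + e)) ε := hcomp
      exact h3.sub_const _
    have hcauchy : ∀ ε, 0 < ε → ε < η → ∃ δ > (0:ℝ), ∀ y, |y| < δ → f (ε + y) = f ε + f y := by
      intro ε h1 h2
      obtain ⟨A, hA, B, δ, hδ, hrel2⟩ := hrel ε h1 (lt_of_lt_of_le h2 hηε₀)
      set δ' := min δ (min ((t₀ - a)/2) ((b - t₀ - ε)/2)) with hδ'
      have hδ'0 : 0 < δ' := lt_min hδ (lt_min (by linarith [ht₀.1]) (by linarith))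
      have hδ'1 : δ' ≤ δ := min_le_left _ _
      have hδ'2 : δ' ≤ (t₀ - a)/2 := le_trans (min_le_right _ _) (min_le_left _ _)
      have hδ'3 : δ' ≤ (b - t₀ - ε)/2 := le_trans (min_le_right _ _) (min_le_right _ _)
      have key : ∀ y, |y| < δ' → u (t₀ + ε + y) = u (t₀ + y) + Real.log A := by
        intro y hy
        have habs := abs_lt.1 hy
        exact hurel t₀ ht₀ ε A B δ hA hδ hrel2 y (lt_of_lt_of_le hy hδ'1)
          ⟨by linarith, by linarith⟩ ⟨by linarith, by linarith⟩
      have hlogA : Real.log A = f ε := by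
        have h5 := key 0 (by simpa using hδ'0)
        simp only [add_zero] at h5
        simp only [hf]
        linarith
      refine ⟨δ', hδ'0, fun y hy => ?_⟩
      have h5 := key y hy
      rw [hlogA] at h5
      simp only [hf]
      rw [show t₀ + (ε + y) = t₀ + ε + y by ring, h5]
      ring
    have hlin : ∀ ε₁, 0 < ε₁ → ε₁ < η → ∀ ε, 0 ≤ ε → ε ≤ ε₁ → f ε = (f ε₁ / ε₁) * ε := by
      intro ε₁ hε₁0 hε₁η
      set c' := f ε₁ / ε₁ with hc'
      set G : ℝ → ℝ := fun ε => f ε - c' * ε with hG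
      have hGc : ContinuousOn G (Set.Icc 0 ε₁) := by
        intro x hx
        have h5 := hfc x hx.1 (lt_of_le_of_lt hx.2 hε₁η)
        exact (h5.sub ((by fun_prop : Continuous fun e : ℝ => c' * e).continuousAt)).continuousWithinAt
      have hG0 : G 0 = 0 := by simp [hG, hf0]
      have hG1 : G ε₁ = 0 := by
        simp only [hG, hc']
        field_simp
        ring
      have hGcauchy : ∀ ε, 0 < ε → ε < η → ∃ δ > (0:ℝ), ∀ y, |y| < δ → G (ε + y) = G ε + G y := by
        intro ε h1 h2
        obtain ⟨δ, hδ, hc⟩ := hcauchy ε h1 h2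
        exact ⟨δ, hδ, fun y hy => by simp only [hG]; rw [hc y hy]; ring⟩
      have Zlem : ∀ θ, 0 < θ → (∀ y, 0 ≤ y → y ≤ θ → G y = 0) → ∀ ε ∈ Set.Icc (0:ℝ) ε₁, G ε = 0 := by
        intro θ hθ0 hθ
        set S := {s | s ∈ Set.Icc (0:ℝ) ε₁ ∧ ∀ r, 0 ≤ r → r ≤ s → G r = 0} with hS
        have h0S : (min θ ε₁) ∈ S :=
          ⟨⟨le_min hθ0.le hε₁0.le, min_le_right _ _⟩,
           fun r h1 h2 => hθ r h1 (le_trans h2 (min_le_left _ _))⟩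
        have hSbdd : BddAbove S := ⟨ε₁, fun x hx => hx.1.2⟩
        set s₁ := sSup S with hs₁
        have hs₁0 : 0 < s₁ := lt_of_lt_of_le (lt_min hθ0 hε₁0) (le_csSup hSbdd h0S)
        have hs₁ε₁ : s₁ ≤ ε₁ := csSup_le ⟨_, h0S⟩ (fun x hx => hx.1.2)
        have hless : ∀ r, 0 ≤ r → r < s₁ → G r = 0 := by
          intro r h1 h2
          obtain ⟨x, hx, hrx⟩ := exists_lt_of_lt_csSup ⟨_, h0S⟩ h2
          exact hx.2 r h1 hrx.le
        have hGs₁ : G s₁ = 0 := by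
          have hcw : ContinuousWithinAt G (Set.Ico 0 s₁) s₁ :=
            (hGc s₁ ⟨hs₁0.le, hs₁ε₁⟩).mono (fun x hx => ⟨hx.1, le_trans hx.2.le hs₁ε₁⟩)
          have hne : (𝓝[Set.Ico (0:ℝ) s₁] s₁).NeBot := by
            apply mem_closure_iff_nhdsWithin_neBot.1
            rw [closure_Ico (by linarith : (0:ℝ) ≠ s₁)]
            exact ⟨hs₁0.le, le_rfl⟩
          have h1 : Tendsto G (𝓝[Set.Ico (0:ℝ) s₁] s₁) (𝓝 (G s₁)) := hcw
          have h2 : Tendsto G (𝓝[Set.Ico (0:ℝ) s₁] s₁) (𝓝 0) := by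
            apply Tendsto.congr' _ tendsto_const_nhds
            filter_upwards [self_mem_nhdsWithin] with x hx
            exact (hless x hx.1 hx.2).symm
          exact tendsto_nhds_unique h1 h2
        have hs₁e : s₁ = ε₁ := by
          by_contra hne2
          have hlt : s₁ < ε₁ := lt_of_le_of_ne hs₁ε₁ hne2
          obtain ⟨δ, hδ, hc⟩ := hGcauchy s₁ hs₁0 (lt_trans hlt hε₁η)
          set y₁ := min (δ/2) (min θ (ε₁ - s₁)) with hy₁
          have hy₁0 : 0 < y₁ := lt_min (by linarith) (lt_min hθ0 (by linarith))
          have hy₁δ : y₁ ≤ δ/2 := min_le_left _ _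
          have hy₁θ : y₁ ≤ θ := le_trans (min_le_right _ _) (min_le_left _ _)
          have hy₁ε : y₁ ≤ ε₁ - s₁ := le_trans (min_le_right _ _) (min_le_right _ _)
          have hmemS : s₁ + y₁ ∈ S := by
            refine ⟨⟨by linarith, by linarith⟩, ?_⟩
            intro r h1 h2
            rcases le_or_gt r s₁ with h3 | h3
            · rcases eq_or_lt_of_le h3 with he | h4
              · rw [he, hGs₁]
              · exact hless r h1 h4
            · have h5 := hc (r - s₁) (by rw [abs_lt]; constructor <;> [linarith; linarith])
              rw [show s₁ + (r - s₁) = r by ring] at h5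
              have h6 : G (r - s₁) = 0 := hθ _ (by linarith) (by linarith)
              rw [h5, hGs₁, h6]; ring
          linarith [le_csSup hSbdd hmemS]
        intro ε hε
        rcases eq_or_lt_of_le hε.2 with he | hl
        · rw [he, hG1]
        · exact hless ε hε.1 (by rw [hs₁e]; exact hl)
      obtain ⟨pM, hpM, hMx⟩ := isCompact_Icc.exists_isMaxOn
        (⟨0, left_mem_Icc.2 hε₁0.le⟩ : (Set.Icc (0:ℝ) ε₁).Nonempty) hGc
      obtain ⟨pm, hpm, hmn⟩ := isCompact_Icc.exists_isMinOn
        (⟨0, left_mem_Icc.2 hε₁0.le⟩ : (Set.Icc (0:ℝ) ε₁).Nonempty) hGc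
      have hnear_max : 0 < G pM → ∃ θ > (0:ℝ), ∀ y, |y| ≤ θ → G y ≤ 0 := by
        intro hpos
        have hpM0 : pM ≠ 0 := fun he => by rw [he, hG0] at hpos; exact lt_irrefl _ hpos
        have hpMε : pM ≠ ε₁ := fun he => by rw [he, hG1] at hpos; exact lt_irrefl _ hpos
        have hpMI : pM ∈ Set.Ioo (0:ℝ) ε₁ :=
          ⟨lt_of_le_of_ne hpM.1 (Ne.symm hpM0), lt_of_le_of_ne hpM.2 hpMε⟩
        obtain ⟨δ, hδ, hc⟩ := hGcauchy pM hpMI.1 (lt_trans hpMI.2 hε₁η)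
        set θ := min (δ/2) (min pM (ε₁ - pM)) with hθ
        have hθ0 : 0 < θ := lt_min (by linarith) (lt_min hpMI.1 (by linarith [hpMI.2]))
        have hθδ : θ ≤ δ/2 := min_le_left _ _
        have hθp : θ ≤ pM := le_trans (min_le_right _ _) (min_le_left _ _)
        have hθε : θ ≤ ε₁ - pM := le_trans (min_le_right _ _) (min_le_right _ _)
        refine ⟨θ, hθ0, fun y hy => ?_⟩
        have habs := abs_le.1 hy
        have hmem2 : pM + y ∈ Set.Icc (0:ℝ) ε₁ := ⟨by linarith, by linarith⟩
        have h5 := hc y (lt_of_le_of_lt hy (by linarith))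
        have h6 : G (pM + y) ≤ G pM := hMx hmem2
        rw [h5] at h6
        linarith
      have hnear_min : G pm < 0 → ∃ θ > (0:ℝ), ∀ y, |y| ≤ θ → 0 ≤ G y := by
        intro hpos
        have hpM0 : pm ≠ 0 := fun he => by rw [he, hG0] at hpos; exact lt_irrefl _ hpos
        have hpMε : pm ≠ ε₁ := fun he => by rw [he, hG1] at hpos; exact lt_irrefl _ hpos
        have hpMI : pm ∈ Set.Ioo (0:ℝ) ε₁ :=
          ⟨lt_of_le_of_ne hpm.1 (Ne.symm hpM0), lt_of_le_of_ne hpm.2 hpMε⟩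
        obtain ⟨δ, hδ, hc⟩ := hGcauchy pm hpMI.1 (lt_trans hpMI.2 hε₁η)
        set θ := min (δ/2) (min pm (ε₁ - pm)) with hθ
        have hθ0 : 0 < θ := lt_min (by linarith) (lt_min hpMI.1 (by linarith [hpMI.2]))
        have hθδ : θ ≤ δ/2 := min_le_left _ _
        have hθp : θ ≤ pm := le_trans (min_le_right _ _) (min_le_left _ _)
        have hθε : θ ≤ ε₁ - pm := le_trans (min_le_right _ _) (min_le_right _ _)
        refine ⟨θ, hθ0, fun y hy => ?_⟩
        have habs := abs_le.1 hy
        have hmem2 : pm + y ∈ Set.Icc (0:ℝ) ε₁ := ⟨by linarith, by linarith⟩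
        have h5 := hc y (lt_of_le_of_lt hy (by linarith))
        have h6 : G pm ≤ G (pm + y) := hmn hmem2
        rw [h5] at h6
        linarith
      have hGzero : ∀ ε ∈ Set.Icc (0:ℝ) ε₁, G ε = 0 := by
        rcases lt_or_ge 0 (G pM) with hM | hM
        · rcases lt_or_ge (G pm) 0 with hm' | hm'
          · obtain ⟨θ₁, hθ₁, h1⟩ := hnear_max hM
            obtain ⟨θ₂, hθ₂, h2⟩ := hnear_min hm'
            apply Zlem (min θ₁ θ₂) (lt_min hθ₁ hθ₂)
            intro y h3 h4
            have h5 : |y| ≤ θ₁ := abs_le.2 ⟨by linarith [le_trans h4 (min_le_left θ₁ θ₂)],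
              le_trans h4 (min_le_left _ _)⟩
            have h6 : |y| ≤ θ₂ := abs_le.2 ⟨by linarith [le_trans h4 (min_le_right θ₁ θ₂)],
              le_trans h4 (min_le_right _ _)⟩
            exact le_antisymm (h1 y h5) (h2 y h6)
          · obtain ⟨θ₁, hθ₁, h1⟩ := hnear_max hM
            apply Zlem (min θ₁ ε₁) (lt_min hθ₁ hε₁0)
            intro y h3 h4
            have h5 : |y| ≤ θ₁ := abs_le.2 ⟨by linarith [le_trans h4 (min_le_left θ₁ ε₁)],
              le_trans h4 (min_le_left _ _)⟩
            have h6 : 0 ≤ G y := le_trans hm' (hmn ⟨h3, le_trans h4 (min_le_right _ _)⟩)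
            exact le_antisymm (h1 y h5) h6
        · rcases lt_or_ge (G pm) 0 with hm' | hm'
          · obtain ⟨θ₂, hθ₂, h2⟩ := hnear_min hm'
            apply Zlem (min θ₂ ε₁) (lt_min hθ₂ hε₁0)
            intro y h3 h4
            have h6 : |y| ≤ θ₂ := abs_le.2 ⟨by linarith [le_trans h4 (min_le_left θ₂ ε₁)],
              le_trans h4 (min_le_left _ _)⟩
            have h5 : G y ≤ 0 := le_trans (hMx ⟨h3, le_trans h4 (min_le_right _ _)⟩) hM
            exact le_antisymm h5 (h2 y h6)
          · intro ε hε
            exact le_antisymm (le_trans (hMx hε) hM) (le_trans hm' (hmn hε))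
      intro ε h1 h2
      have h5 := hGzero ε ⟨h1, h2⟩
      simp only [hG] at h5
      linarith
    set c := f (η/2) / (η/2) with hcdef
    have hcfull : ∀ ε, 0 ≤ ε → ε < η → f ε = c * ε := by
      intro ε h1 h2
      rcases eq_or_lt_of_le h1 with he | h1'
      · rw [← he, hf0]; ring
      · set ε₁ := max ε (η/2) with hε₁
        have hε₁0 : 0 < ε₁ := lt_of_lt_of_le (by linarith) (le_max_right _ _)
        have hε₁η : ε₁ < η := max_lt h2 (by linarith)
        have hl := hlin ε₁ hε₁0 hε₁η
        have e1 := hl (η/2) (by linarith) (le_max_right _ _)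
        have e2 := hl ε h1 (le_max_left _ _)
        have e3 : c = f ε₁ / ε₁ := by
          rw [hcdef, e1]
          exact mul_div_cancel_right₀ _ (ne_of_gt (by linarith : (0:ℝ) < η/2))
        rw [e2, ← e3]
    -- two-sided germ at shift η/2
    obtain ⟨A, hA, B, δ, hδ, hrel2⟩ := hrel (η/2) (by linarith) (by linarith)
    set δ' := min δ (min ((t₀ - a)/2) (η/4)) with hδ'
    have hδ'0 : 0 < δ' := lt_min hδ (lt_min (by linarith [ht₀.1]) (by linarith))
    have hδ'1 : δ' ≤ δ := min_le_left _ _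
    have hδ'2 : δ' ≤ (t₀ - a)/2 := le_trans (min_le_right _ _) (min_le_left _ _)
    have hδ'3 : δ' ≤ η/4 := le_trans (min_le_right _ _) (min_le_right _ _)
    have key : ∀ y, |y| < δ' → u (t₀ + η/2 + y) = u (t₀ + y) + Real.log A := by
      intro y hy
      have habs := abs_lt.1 hy
      exact hurel t₀ ht₀ (η/2) A B δ hA hδ hrel2 y (lt_of_lt_of_le hy hδ'1)
        ⟨by linarith, by linarith⟩ ⟨by linarith, by linarith⟩
    have hlogA : Real.log A = c * (η/2) := by
      have h5 := key 0 (by simpa using hδ'0)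
      simp only [add_zero] at h5
      have h6 := hcfull (η/2) (by linarith) (by linarith)
      simp only [hf] at h6
      linarith
    refine ⟨c, η, δ', hη0, by linarith, hδ'0, ?_, ?_⟩
    · intro ε h1 h2
      have h5 := hcfull ε h1 h2
      simp only [hf] at h5
      linarith
    · intro y hy
      have habs := abs_lt.1 hy
      have h5 := key y hy
      have h6 : u (t₀ + η/2 + y) = u t₀ + c * (η/2 + y) := by
        have h7 := hcfull (η/2 + y) (by linarith) (by linarith)
        simp only [hf] at h7
        rw [show t₀ + η/2 + y = t₀ + (η/2 + y) by ring]
        linarith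
      rw [h6, hlogA] at h5
      have h8 : c * (η/2 + y) = c * (η/2) + c * y := by ring
      rw [h8] at h5
      linarith
  choose! C ηf δf hη0f hηbf hδ0f hrgt hlocf using hS9
  have hright : ∀ t ∈ Set.Ioo a b, ∀ s ∈ Set.Ioo a b, t ≤ s → u s = u t + C t * (s - t) := by
    intro t ht s hs hts
    set S := {x | x ∈ Set.Icc t s ∧ ∀ r ∈ Set.Icc t x, u r = u t + C t * (r - t)} with hSdef
    have htS : t ∈ S := ⟨⟨le_rfl, hts⟩, fun r hr => by
      have h9 : r = t := le_antisymm hr.2 hr.1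
      rw [h9]; ring⟩
    have hSbdd : BddAbove S := ⟨s, fun x hx => hx.1.2⟩
    set x₁ := sSup S with hx₁
    have hx₁t : t ≤ x₁ := le_csSup hSbdd htS
    have hx₁s : x₁ ≤ s := csSup_le ⟨_, htS⟩ (fun x hx => hx.1.2)
    have hx₁mem : x₁ ∈ Set.Ioo a b := ⟨lt_of_lt_of_le ht.1 hx₁t, lt_of_le_of_lt hx₁s hs.2⟩
    have hless : ∀ r, t ≤ r → r < x₁ → u r = u t + C t * (r - t) := by
      intro r h1 h2
      obtain ⟨x, hx, hrx⟩ := exists_lt_of_lt_csSup ⟨_, htS⟩ h2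
      exact hx.2 r ⟨h1, hrx.le⟩
    have hux₁ : u x₁ = u t + C t * (x₁ - t) := by
      rcases eq_or_lt_of_le hx₁t with he | hlt2
      · rw [← he]; ring
      · have h1 : Tendsto u (𝓝[Set.Ico t x₁] x₁) (𝓝 (u x₁)) :=
          (hcontu x₁ hx₁mem).continuousWithinAt
        have hne : (𝓝[Set.Ico t x₁] x₁).NeBot := by
          apply mem_closure_iff_nhdsWithin_neBot.1
          rw [closure_Ico (ne_of_lt hlt2)]
          exact ⟨hlt2.le, le_rfl⟩
        have h2 : Tendsto u (𝓝[Set.Ico t x₁] x₁) (𝓝 (u t + C t * (x₁ - t))) := by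
          have h3 : Tendsto (fun r => u t + C t * (r - t)) (𝓝[Set.Ico t x₁] x₁)
              (𝓝 (u t + C t * (x₁ - t))) := by
            apply Filter.Tendsto.mono_left _ nhdsWithin_le_nhds
            exact (by fun_prop : Continuous (fun r : ℝ => u t + C t * (r - t))).tendsto x₁
          apply h3.congr'
          filter_upwards [self_mem_nhdsWithin] with r hr
          exact (hless r hr.1 hr.2).symm
        exact tendsto_nhds_unique h1 h2
    have hx₁eq : x₁ = s := by
      by_contra hne2
      have hlt2 : x₁ < s := lt_of_le_of_ne hx₁s hne2
      have hδ'0 : 0 < δf x₁ := hδ0f x₁ hx₁mem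
      have hl := hlocf x₁ hx₁mem
      have hcc : C x₁ = C t := by
        rcases eq_or_lt_of_le hx₁t with he | hlt3
        · rw [← he]
        · set y₀ := -min (δf x₁/2) ((x₁ - t)/2) with hy₀
          have hy₀m : 0 < min (δf x₁/2) ((x₁ - t)/2) := lt_min (by linarith) (by linarith)
          have hy₀1 : min (δf x₁/2) ((x₁ - t)/2) ≤ δf x₁/2 := min_le_left _ _
          have hy₀2 : min (δf x₁/2) ((x₁ - t)/2) ≤ (x₁ - t)/2 := min_le_right _ _
          have h5 := hl y₀ (by
            rw [hy₀, abs_neg, abs_of_pos hy₀m]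
            linarith)
          have h6 : u (x₁ + y₀) = u t + C t * ((x₁ + y₀) - t) := by
            apply hless
            · simp only [hy₀]; linarith
            · simp only [hy₀]; linarith
          rw [hux₁] at h5
          have h7 : C t * ((x₁ + y₀) - t) = C t * (x₁ - t) + C t * y₀ := by ring
          rw [h7] at h6
          have h8 : C x₁ * y₀ = C t * y₀ := by linarith
          exact mul_right_cancel₀ (by simp only [hy₀]; linarith : y₀ ≠ 0) h8
      set x₂ := min s (x₁ + δf x₁/2) with hx₂
      have hx₂gt : x₁ < x₂ := lt_min hlt2 (by linarith)
      have hx₂S : x₂ ∈ S := by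
        refine ⟨⟨le_trans hx₁t hx₂gt.le, min_le_left _ _⟩, ?_⟩
        intro r hr
        rcases lt_or_ge r x₁ with h3 | h3
        · exact hless r hr.1 h3
        · rcases eq_or_lt_of_le h3 with he | h4
          · rw [← he]; exact hux₁
          · have hr2 : r ≤ x₁ + δf x₁/2 := le_trans hr.2 (min_le_right _ _)
            have h5 := hl (r - x₁) (by rw [abs_lt]; constructor <;> linarith)
            rw [show x₁ + (r - x₁) = r by ring] at h5
            rw [h5, hcc, hux₁]
            ring
      have := le_csSup hSbdd hx₂S
      linarith
    rw [← hx₁eq]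
    exact hux₁
  have hslope : ∀ t ∈ Set.Ioo a b, ∀ t' ∈ Set.Ioo a b, C t = C t' := by
    intro t ht t' ht'
    set m := max t t' with hmdef
    have hmmem : m ∈ Set.Ioo a b := ⟨lt_of_lt_of_le ht.1 (le_max_left _ _), max_lt ht.2 ht'.2⟩
    set s₁ := m + (b - m)/3 with hs₁def
    set s₂ := m + 2*(b - m)/3 with hs₂def
    have hbm : 0 < b - m := by linarith [hmmem.2]
    have hs₁ : s₁ ∈ Set.Ioo a b := ⟨by simp only [hs₁def]; linarith [hmmem.1], by simp only [hs₁def]; linarith⟩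
    have hs₂ : s₂ ∈ Set.Ioo a b := ⟨by simp only [hs₂def]; linarith [hmmem.1], by simp only [hs₂def]; linarith⟩
    have hts₁ : t ≤ s₁ := by
      have := le_max_left t t'
      simp only [hs₁def]; linarith
    have hts₂ : t ≤ s₂ := by
      have := le_max_left t t'
      simp only [hs₂def]; linarith
    have ht's₁ : t' ≤ s₁ := by
      have := le_max_right t t'
      simp only [hs₁def]; linarith
    have ht's₂ : t' ≤ s₂ := by
      have := le_max_right t t'
      simp only [hs₂def]; linarith
    have e1 := hright t ht s₁ hs₁ hts₁
    have e2 := hright t ht s₂ hs₂ hts₂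
    have e3 := hright t' ht' s₁ hs₁ ht's₁
    have e4 := hright t' ht' s₂ hs₂ ht's₂
    have r1 : C t * (s₂ - t) - C t * (s₁ - t) = C t * (s₂ - s₁) := by ring
    have r2 : C t' * (s₂ - t') - C t' * (s₁ - t') = C t' * (s₂ - s₁) := by ring
    have h5 : C t * (s₂ - s₁) = C t' * (s₂ - s₁) := by linarith
    have h6 : s₂ - s₁ ≠ 0 := by
      have h7 : s₂ - s₁ = (b - m)/3 := by simp only [hs₁def, hs₂def]; ring
      rw [h7]; linarith
    exact mul_right_cancel₀ h6 h5
  set t₀ := (a+b)/2 with ht₀def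
  have ht₀ : t₀ ∈ Set.Ioo a b := ⟨by simp only [ht₀def]; linarith, by simp only [ht₀def]; linarith⟩
  set c₀ := C t₀ with hc₀def
  have huglob : ∀ t ∈ Set.Ioo a b, u t = u t₀ + c₀ * (t - t₀) := by
    intro t ht
    rcases le_total t₀ t with h1 | h1
    · exact hright t₀ ht₀ t ht h1
    · have h2 := hright t ht t₀ ht₀ h1
      rw [hslope t ht t₀ ht₀] at h2
      have h3 : c₀ * (t₀ - t) = -(c₀ * (t - t₀)) := by ring
      rw [h3] at h2
      linarith
  have hgexp : ∀ t ∈ Set.Ioo a b, g t = Real.exp (u t₀ - c₀ * t₀) * Real.exp (c₀ * t) := by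
    intro t ht
    have h1 : g t = Real.exp (u t) := (Real.exp_log (hgpos t ht)).symm
    rw [h1, huglob t ht, ← Real.exp_add]
    congr 1
    ring
  set K := Real.exp (u t₀ - c₀ * t₀) with hKdef
  have hK0 : 0 < K := Real.exp_pos _
  by_cases hc0 : c₀ = 0
  · right
    refine ⟨K, w t₀ - K * t₀, ?_⟩
    have key : ∀ p q : ℝ, p ∈ Set.Ioo a b → q ∈ Set.Ioo a b → p < q →
        w q - w p = K * (q - p) := by
      intro p q hp hq hpq
      obtain ⟨ξ, hξ, hξeq⟩ := exists_hasDerivAt_eq_slope w g hpq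
        (fun r hr => (hca r ⟨lt_of_lt_of_le hp.1 hr.1, lt_of_le_of_lt hr.2 hq.2⟩).continuousWithinAt)
        (fun r hr => hasd r ⟨lt_trans hp.1 hr.1, lt_trans hr.2 hq.2⟩)
      have hξmem : ξ ∈ Set.Ioo a b := ⟨lt_trans hp.1 hξ.1, lt_trans hξ.2 hq.2⟩
      have h5 : g ξ = K := by rw [hgexp ξ hξmem, hc0]; simp
      rw [h5, eq_div_iff (by linarith : q - p ≠ 0)] at hξeq
      linarith
    intro x hx
    rcases lt_trichotomy x t₀ with h1 | h1 | h1
    · have h2 := key x t₀ hx ht₀ h1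
      have h3 : K * (t₀ - x) = K * t₀ - K * x := by ring
      rw [h3] at h2
      linarith
    · rw [h1]; ring
    · have h2 := key t₀ x ht₀ hx h1
      have h3 : K * (x - t₀) = K * x - K * t₀ := by ring
      rw [h3] at h2
      linarith
  · left
    refine ⟨K / c₀, c₀, w t₀ - K / c₀ * Real.exp (c₀ * t₀), ?_⟩
    have hφ : ∀ r : ℝ, HasDerivAt (fun t => K / c₀ * Real.exp (c₀ * t)) (K * Real.exp (c₀ * r)) r := by
      intro r
      have h1 : HasDerivAt (fun t : ℝ => c₀ * t) c₀ r := by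
        simpa using (hasDerivAt_id r).const_mul c₀
      have h2 := h1.exp
      have h3 := h2.const_mul (K / c₀)
      rw [show K / c₀ * (Real.exp (c₀ * r) * c₀) = K * Real.exp (c₀ * r) by
        rw [mul_comm (Real.exp (c₀ * r)) c₀, ← mul_assoc, div_mul_cancel₀ K hc0]] at h3
      exact h3
    set ψ : ℝ → ℝ := fun t => w t - K / c₀ * Real.exp (c₀ * t) with hψdef
    have hψd : ∀ r ∈ Set.Ioo a b, HasDerivAt ψ 0 r := by
      intro r hr
      have h4 := (hasd r hr).sub (hφ r)
      have h5 : g r - K * Real.exp (c₀ * r) = 0 := by rw [hgexp r hr]; ring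
      rwa [h5] at h4
    have key : ∀ p q : ℝ, p ∈ Set.Ioo a b → q ∈ Set.Ioo a b → p < q → ψ q = ψ p := by
      intro p q hp hq hpq
      obtain ⟨ξ, hξ, hξeq⟩ := exists_hasDerivAt_eq_slope ψ (fun _ => (0:ℝ)) hpq
        (fun r hr => by
          have hrm : r ∈ Set.Ioo a b := ⟨lt_of_lt_of_le hp.1 hr.1, lt_of_le_of_lt hr.2 hq.2⟩
          exact ((hca r hrm).sub ((by fun_prop :
            Continuous (fun t : ℝ => K / c₀ * Real.exp (c₀ * t))).continuousAt)).continuousWithinAt)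
        (fun r hr => hψd r ⟨lt_trans hp.1 hr.1, lt_trans hr.2 hq.2⟩)
      rcases div_eq_zero_iff.1 hξeq.symm with h5 | h5
      · linarith
      · exfalso; linarith
    intro x hx
    have hψx : ψ x = ψ t₀ := by
      rcases lt_trichotomy x t₀ with h1 | h1 | h1
      · exact (key x t₀ hx ht₀ h1).symm
      · rw [h1]
      · exact key t₀ x ht₀ hx h1
    simp only [hψdef] at hψx
    linarith

theorem stmt0 (a b : ℝ) (hab : a < b) (U : Set ℝ) (hU : U = Set.Ioo a b)
    (w : ℝ → ℝ) (hw : ContinuousOn w U)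
    (h : ∀ x ∈ U, ∃ ε₀ > (0:ℝ), ∀ ε : ℝ, 0 < ε → ε < ε₀ →
      ∃ A > (0:ℝ), ∃ B : ℝ, ∃ δ > (0:ℝ), ∀ y : ℝ, |y| < δ →
        x + y ∈ U → x + ε + y ∈ U → w (x + ε + y) = A * w (x + y) + B) :
    (∃ c₁ c₂ c₃ : ℝ, ∀ x ∈ U, w x = c₁ * Real.exp (c₂ * x) + c₃) ∨
    (∃ c₁ c₂ : ℝ, ∀ x ∈ U, w x = c₁ * x + c₂) := by
  subst hU
  have h' : Hyp a b w := h
  by_cases hinj : Set.InjOn w (Set.Ioo a b)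
  · rcases ContinuousOn.strictMonoOn_of_injOn_Ioo hab hw hinj with hmo | han
    · exact main_mono hab hw h' hmo
    · have hneg : StrictMonoOn (fun t => -(w t)) (Set.Ioo a b) := fun x hx y hy hxy =>
        neg_lt_neg (han hx hy hxy)
      rcases main_mono hab hw.neg h'.neg hneg with ⟨c₁, c₂, c₃, hc⟩ | ⟨c₁, c₂, hc⟩
      · left
        refine ⟨-c₁, c₂, -c₃, fun x hx => ?_⟩
        have h2 : -(w x) = c₁ * Real.exp (c₂ * x) + c₃ := hc x hx
        linarith
      · right
        refine ⟨-c₁, -c₂, fun x hx => ?_⟩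
        have h2 : -(w x) = c₁ * x + c₂ := hc x hx
        linarith
  · obtain ⟨z, r, c, hr, hss, hcc⟩ := exists_const_interval hw h' hinj
    have hconst := caseA hw h' hr hss hcc
    right
    exact ⟨0, c, fun x hx => by rw [hconst x hx]; ring⟩
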